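/- arXiv:1112.0799 — 2 statements merged into one kernel-verified Lean document; each statement's English description precedes it below -/
import Mathlib

section
/- Let A be an Artin algebra and μ the Gabriel–Roiter measure. If X is the directed union of submodules X_α, then μ(X) = sup_α μ(X_α) in the lexicographically ordered power set 2^ℕ. -/
universe u v

/-- The lexicographic order on the power set of `ℕ`:
`I ≤ J` iff `inf (J \ I) ≤ inf (I \ J)`, where the infimum of the empty set is `∞`. -/
def lexLE (I J : Set ℕ) : Prop :=
  (⨅ n ∈ J \ I, (n : ℕ∞)) ≤ ⨅ n ∈ I \ J, (n : ℕ∞)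

/-- `I` is a supremum of `S` with respect to the lexicographic order. -/
def lexIsLUB (S : Set (Set ℕ)) (I : Set ℕ) : Prop :=
  (∀ J ∈ S, lexLE J I) ∧ ∀ K : Set ℕ, (∀ J ∈ S, lexLE J K) → lexLE I K

/-- The composition length of the module `M` is `n`. -/
def moduleLengthIs (A : Type u) [Ring A] (M : Type v) [AddCommGroup M] [Module A M]
    (n : ℕ) : Prop :=
  ∃ s : CompositionSeries (Submodule A M), s.head = ⊥ ∧ s.last = ⊤ ∧ s.length = n

/-- `M` is an indecomposable module: nonzero and not a direct sum of two nonzero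
submodules. -/
def IsIndecModule (A : Type u) [Ring A] (M : Type v) [AddCommGroup M] [Module A M] : Prop :=
  Nontrivial M ∧ ∀ N₁ N₂ : Submodule A M, IsCompl N₁ N₂ → N₁ = ⊥ ∨ N₂ = ⊥

/-- The sets `{ℓ(X₁), …, ℓ(X_r)}` attached to the chains `X₁ ⊊ … ⊊ X_r ⊆ M` of
indecomposable finite-length submodules of `M`. -/
def grChainSets (A : Type u) [Ring A] (M : Type v) [AddCommGroup M] [Module A M] :
    Set (Set ℕ) :=
  { I | ∃ (r : ℕ) (c : Fin (r + 1) → Submodule A M),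
      StrictMono c ∧
      (∀ i, IsIndecModule A (c i) ∧ IsFiniteLength A (c i)) ∧
      I = { n | ∃ i, moduleLengthIs A (c i) n } }

/-- `I` is the Gabriel–Roiter measure of `M`: the supremum in the lexicographically
ordered power set of `ℕ` of the length sets of chains of indecomposable finite-length
submodules of `M`. -/
def GRIsMeasure (A : Type u) [Ring A] (M : Type v) [AddCommGroup M] [Module A M]
    (I : Set ℕ) : Prop :=
  lexIsLUB (grChainSets A M) I

/-!
A chain `X₁ ⊊ ⋯ ⊊ X_r` of finite-length submodules of `X` ends in a finitely generated
module, which is a compact element of the submodule lattice and hence lies in some `X_α` of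
the directed family. So the chains of `X` are exactly the chains of the `X_α`, and the
supremum of their length sets over `X` is the supremum over `α` of the suprema over `X_α`,
since the lexicographic order on `Set ℕ` is transitive: it is the order of `Lex (ℕ → Prop)`.
-/

lemma Prop.lt_iff {p q : Prop} : p < q ↔ ¬p ∧ q := by
  rw [lt_iff_le_not_ge]
  change (p → q) ∧ ¬(q → p) ↔ _
  tauto

lemma biInf_natCast_le_iff {S : Set ℕ} {n : ℕ} :
    (⨅ m ∈ S, (m : ℕ∞)) ≤ n ↔ ∃ m ∈ S, m ≤ n := by
  rw [← ENat.lt_add_one_iff (ENat.natCast_ne_top n)]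
  simp only [iInf_lt_iff, exists_prop]
  norm_cast
  simp only [Nat.lt_add_one_iff]

lemma lexLE_iff_forall_exists_lt {I J : Set ℕ} :
    lexLE I J ↔ ∀ n ∈ I \ J, ∃ m ∈ J \ I, m < n := by
  simp only [lexLE, le_iInf₂_iff, biInf_natCast_le_iff]
  refine forall₂_congr fun n hn => exists_congr fun m => and_congr_right fun hm =>
    ⟨fun h => h.lt_of_ne ?_, le_of_lt⟩
  rintro rfl
  exact hn.2 hm.1

lemma lexLE_iff_toLex_le {I J : Set ℕ} :
    lexLE I J ↔ toLex (· ∈ I) ≤ toLex (· ∈ J) := by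
  rw [lexLE_iff_forall_exists_lt, le_iff_eq_or_lt]
  constructor
  · intro h
    by_cases hIJ : I = J
    · exact .inl (congrArg _ hIJ)
    classical
    have hdiff : ∃ n, ¬(n ∈ I ↔ n ∈ J) := by
      by_contra! hsame
      exact hIJ (Set.ext hsame)
    have hmin {m} (hm : m < Nat.find hdiff) : m ∈ I ↔ m ∈ J :=
      not_not.mp (Nat.find_min hdiff hm)
    refine .inr ⟨Nat.find hdiff, fun j hj => propext (hmin hj), Prop.lt_iff.mpr ?_⟩
    by_cases hI : Nat.find hdiff ∈ I
    · have hJ : Nat.find hdiff ∉ J := fun hJ =>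
        Nat.find_spec hdiff ⟨fun _ => hJ, fun _ => hI⟩
      obtain ⟨m, hm, hlt⟩ := h _ ⟨hI, hJ⟩
      exact absurd ((hmin hlt).mpr hm.1) hm.2
    · refine ⟨hI, by_contra fun hJ => Nat.find_spec hdiff ?_⟩
      exact ⟨fun h => absurd h hI, fun h => absurd h hJ⟩
  · rintro (hIJ | ⟨i, hagree, hi⟩) n ⟨hnI, hnJ⟩
    · exact absurd (cast (congrFun hIJ n) hnI) hnJ
    · obtain ⟨hiI, hiJ⟩ := Prop.lt_iff.mp hi
      refine ⟨i, ⟨hiJ, hiI⟩, lt_of_not_ge fun hni => ?_⟩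
      rcases hni.lt_or_eq with hlt | rfl
      · exact hnJ (cast (hagree n hlt) hnI)
      · exact hiI hnI

lemma lexLE_trans {I J K : Set ℕ} (hIJ : lexLE I J) (hJK : lexLE J K) : lexLE I K := by
  rw [lexLE_iff_toLex_le] at *
  exact hIJ.trans hJK

universe w

section transport

variable {A : Type u} [Ring A] {M : Type v} {M' : Type w}
  [AddCommGroup M] [Module A M] [AddCommGroup M'] [Module A M']

lemma LinearEquiv.moduleLengthIs (e : M ≃ₗ[A] M') {n : ℕ} (h : moduleLengthIs A M n) :
    moduleLengthIs A M' n := by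
  obtain ⟨s, hhead, hlast, hlength⟩ := h
  let f := Submodule.orderIsoMapComap e
  refine ⟨⟨s.length, fun i => f (s i), fun i => (apply_covBy_apply_iff f).mpr (s.step i)⟩,
    ?_, ?_, hlength⟩
  · exact (congrArg f hhead).trans f.map_bot
  · exact (congrArg f hlast).trans f.map_top

lemma LinearEquiv.isIndecModule (e : M ≃ₗ[A] M') (h : IsIndecModule A M) :
    IsIndecModule A M' := by
  obtain ⟨_, hindec⟩ := h
  let f := Submodule.orderIsoMapComap e
  refine ⟨e.symm.toEquiv.nontrivial, fun N₁ N₂ hcompl => ?_⟩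
  simpa only [f.symm.injective.eq_iff' f.symm.map_bot] using
    hindec (f.symm N₁) (f.symm N₂) (f.symm.isCompl hcompl)

lemma mem_grChainSets_of_linearEquiv {r : ℕ} {c : Fin (r + 1) → Submodule A M}
    (hc : ∀ i, IsIndecModule A (c i) ∧ IsFiniteLength A (c i))
    {d : Fin (r + 1) → Submodule A M'} (hd : StrictMono d) (e : ∀ i, c i ≃ₗ[A] d i) :
    { n | ∃ i, moduleLengthIs A (c i) n } ∈ grChainSets A M' := by
  refine ⟨r, d, hd,
    fun i => ⟨(e i).isIndecModule (hc i).1, (e i).isFiniteLength (hc i).2⟩, ?_⟩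
  ext n
  exact ⟨fun ⟨i, hi⟩ => ⟨i, (e i).moduleLengthIs hi⟩,
    fun ⟨i, hi⟩ => ⟨i, (e i).symm.moduleLengthIs hi⟩⟩

end transport

section submodule

variable {A : Type u} [Ring A] {X : Type v} [AddCommGroup X] [Module A X]

lemma grChainSets_submodule_subset (N : Submodule A X) : grChainSets A N ⊆ grChainSets A X := by
  rintro _ ⟨r, c, hc, hprop, rfl⟩
  exact mem_grChainSets_of_linearEquiv hprop
    ((Submodule.map_strictMono_of_injective N.injective_subtype).comp hc)
    fun i => Submodule.equivMapOfInjective _ N.injective_subtype (c i)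

lemma mem_grChainSets_submodule {N : Submodule A X} {r : ℕ}
    {c : Fin (r + 1) → Submodule A X}
    (hc : StrictMono c) (hprop : ∀ i, IsIndecModule A (c i) ∧ IsFiniteLength A (c i))
    (hcN : c (Fin.last r) ≤ N) :
    { n | ∃ i, moduleLengthIs A (c i) n } ∈ grChainSets A N := by
  have hle i : c i ≤ N := (hc.monotone (Fin.le_last i)).trans hcN
  refine mem_grChainSets_of_linearEquiv hprop (d := fun i => (c i).comap N.subtype)
    (fun a b hab => ?_) fun i => (Submodule.comapSubtypeEquivOfLe (hle i)).symm
  simp only [lt_iff_le_not_ge, Submodule.comap_subtype_le_iff, inf_of_le_right (hle a),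
    inf_of_le_right (hle b)]
  exact hc hab

lemma Submodule.FG.exists_le_of_directed {p : Submodule A X} (hp : p.FG)
    {ι : Type*} [Nonempty ι] {Xα : ι → Submodule A X} (hdir : Directed (· ≤ ·) Xα)
    (hle : p ≤ ⨆ α, Xα α) :
    ∃ α, p ≤ Xα α := by
  obtain ⟨_, ⟨α, rfl⟩, hα⟩ := (fg_iff_compact p).mp hp _ _ (Set.range_nonempty Xα)
    hdir.directedOn_range isLUB_iSup hle
  exact ⟨α, hα⟩

lemma exists_mem_grChainSets_of_directed {ι : Type*} [Nonempty ι] {Xα : ι → Submodule A X}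
    (hdir : Directed (· ≤ ·) Xα) (hunion : (⨆ α, Xα α) = ⊤) {J : Set ℕ}
    (hJ : J ∈ grChainSets A X) : ∃ α, J ∈ grChainSets A (Xα α) := by
  obtain ⟨r, c, hc, hprop, rfl⟩ := hJ
  have hfg : (c (Fin.last r)).FG :=
    have := (isFiniteLength_iff_isNoetherian_isArtinian.mp (hprop (Fin.last r)).2).1
    Module.Finite.iff_fg.mp inferInstance
  obtain ⟨α, hα⟩ := hfg.exists_le_of_directed hdir (hunion ▸ le_top)
  exact ⟨α, mem_grChainSets_submodule hc hprop hα⟩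

end submodule

theorem GR_directed_union_general
    {A : Type u} [Ring A]
    (X : Type v) [AddCommGroup X] [Module A X]
    {ι : Type*} [Nonempty ι] (Xα : ι → Submodule A X)
    (hdir : Directed (· ≤ ·) Xα) (hunion : (⨆ α, Xα α) = ⊤)
    (Iα : ι → Set ℕ) (hIα : ∀ α, GRIsMeasure A (Xα α) (Iα α))
    (I : Set ℕ) (hI : GRIsMeasure A X I) :
    lexIsLUB (Set.range Iα) I := by
  refine ⟨?_, fun K hK => hI.2 K fun J hJ => ?_⟩
  · rintro _ ⟨α, rfl⟩
    exact (hIα α).2 I fun J hJ => hI.1 J (grChainSets_submodule_subset (Xα α) hJ)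
  · obtain ⟨α, hJα⟩ := exists_mem_grChainSets_of_directed hdir hunion hJ
    exact lexLE_trans ((hIα α).1 J hJα) (hK _ ⟨α, rfl⟩)

/-- Over an Artin algebra, the Gabriel–Roiter measure of a directed union is the supremum
of the measures: if `X = ⋃_α X_α` is a directed union of submodules, then
`μ(X) = sup_α μ(X_α)` in the lexicographically ordered power set of `ℕ`. -/
theorem GR_directed_union
    {R : Type u} [CommRing R] [IsArtinianRing R]
    {A : Type u} [Ring A] [Algebra R A] [Module.Finite R A]
    (X : Type v) [AddCommGroup X] [Module A X]
    {ι : Type*} [Nonempty ι] (Xα : ι → Submodule A X)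
    (hdir : Directed (· ≤ ·) Xα) (hunion : (⨆ α, Xα α) = ⊤)
    (Iα : ι → Set ℕ) (hIα : ∀ α, GRIsMeasure A (Xα α) (Iα α))
    (I : Set ℕ) (hI : GRIsMeasure A X I) :
    lexIsLUB (Set.range Iα) I :=
  GR_directed_union_general X Xα hdir hunion Iα hIα I hI
end

section
/- In the lexicographic order on 2^ℕ, the set of all odd numbers {1,3,5,7,…} is the supremum of the finite sets {1,3,…,2n−1} (n ≥ 1), and the set {1,2,4,6,…} (1 together with all positive even numbers) is simultaneously the supremum of the sets {1,2,4,…,2n} (n ≥ 1) and the infimum of the sets {1,2,4,…,2n−2,2n−1} (n ≥ 2). -/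
/-- Strict lexicographic order. -/
def lexLT (I J : Set ℕ) : Prop := lexLE I J ∧ I ≠ J

/-- The Gabriel–Roiter measure `{1, 3, 5, …, 2n−1}` of the preprojective Kronecker
module `P_n`. -/
def GRP (n : ℕ) : Set ℕ := {k | Odd k ∧ k ≤ 2 * n - 1}

/-- The Gabriel–Roiter measure `{1, 2, 4, …, 2n}` of the regular Kronecker
module `R_n(λ)`. -/
def GRR (n : ℕ) : Set ℕ := {1} ∪ {k | 0 < k ∧ Even k ∧ k ≤ 2 * n}

/-- The Gabriel–Roiter measure `{1, 2, 4, …, 2n−2, 2n−1}` of the preinjective Kronecker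
module `Q_n`. -/
def GRQ (n : ℕ) : Set ℕ := {1} ∪ {k | 0 < k ∧ Even k ∧ k ≤ 2 * n - 2} ∪ {2 * n - 1}

/-- `I` is an infimum of `S` with respect to the lexicographic order. -/
def lexIsGLB (S : Set (Set ℕ)) (I : Set ℕ) : Prop :=
  (∀ J ∈ S, lexLE I J) ∧ ∀ K : Set ℕ, (∀ J ∈ S, lexLE K J) → lexLE K I

/-!
`I ≤ J` holds iff every element of `I \ J` is at least some element of `J \ I`.
Each `GRP n`, `GRR n` lies below its limit `I` and agrees with it up to `2n`, so an upper bound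
missing some `a ∈ I`, compared with a member containing `a`, must contain a new element `≤ a`
outside `I`. Dually, `GRQ n` agrees with `{1, 2, 4, …}` below `2n − 1` and adds `2n − 1` there.
-/

theorem lexLE_iff {I J : Set ℕ} : lexLE I J ↔ ∀ a ∈ I \ J, ∃ b ∈ J \ I, b ≤ a := by
  refine ⟨fun h a ha => ?_, fun h => le_iInf₂ fun a ha => ?_⟩
  · have hlt : (⨅ n ∈ J \ I, (n : ℕ∞)) < (a + 1 : ℕ) :=
      (h.trans (iInf₂_le a ha)).trans_lt (by exact_mod_cast a.lt_succ_self)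
    obtain ⟨b, hb, hba⟩ := lt_biInf_iff.mp hlt
    exact ⟨b, hb, Nat.lt_succ_iff.mp (by exact_mod_cast hba)⟩
  · obtain ⟨b, hb, hba⟩ := h a ha
    exact (iInf₂_le b hb).trans (by exact_mod_cast hba)

theorem lexLE_of_subset {I J : Set ℕ} (h : I ⊆ J) : lexLE I J :=
  lexLE_iff.mpr fun _ ha => absurd (h ha.1) ha.2

theorem lexIsLUB_of_forall_mem {S : Set (Set ℕ)} {I : Set ℕ} (hS : ∀ J ∈ S, lexLE J I)
    (hI : ∀ a ∈ I, ∃ J ∈ S, a ∈ J ∧ ∀ b ≤ a, b ∈ I → b ∈ J) : lexIsLUB S I := by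
  refine ⟨hS, fun K hK => lexLE_iff.mpr fun a ha => ?_⟩
  obtain ⟨J, hJS, haJ, hJ⟩ := hI a ha.1
  obtain ⟨b, hb, hba⟩ := lexLE_iff.mp (hK J hJS) a ⟨haJ, ha.2⟩
  exact ⟨b, ⟨hb.1, fun hbI => hb.2 (hJ b hba hbI)⟩, hba⟩

theorem lexIsGLB_of_forall_not_mem {S : Set (Set ℕ)} {I : Set ℕ} (hS : ∀ J ∈ S, lexLE I J)
    (hI : ∀ a ∉ I, ∃ J ∈ S, a ∉ J ∧ ∀ b ≤ a, b ∈ J → b ∈ I) : lexIsGLB S I := by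
  refine ⟨hS, fun K hK => lexLE_iff.mpr fun a ha => ?_⟩
  obtain ⟨J, hJS, haJ, hJ⟩ := hI a ha.2
  obtain ⟨b, hb, hba⟩ := lexLE_iff.mp (hK J hJS) a ⟨ha.1, haJ⟩
  exact ⟨b, ⟨hJ b hba hb.1, hb.2⟩, hba⟩

theorem lexIsLUB_GRP : lexIsLUB { I | ∃ n : ℕ, 1 ≤ n ∧ I = GRP n } {k | Odd k} := by
  refine lexIsLUB_of_forall_mem (fun J ⟨n, _, hJ⟩ => hJ ▸ lexLE_of_subset fun k hk => hk.1) ?_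
  rintro a ⟨j, rfl⟩
  exact ⟨GRP (j + 1), ⟨j + 1, by omega, rfl⟩, ⟨⟨j, rfl⟩, by omega⟩, fun b hb hbo => ⟨hbo, by omega⟩⟩

theorem lexIsLUB_GRR :
    lexIsLUB { I | ∃ n : ℕ, 1 ≤ n ∧ I = GRR n } ({1} ∪ {k | 0 < k ∧ Even k}) := by
  refine lexIsLUB_of_forall_mem (fun J ⟨n, _, hJ⟩ => hJ ▸ lexLE_of_subset ?_) fun a ha => ?_
  · exact Set.union_subset_union_right _ fun k hk => ⟨hk.1, hk.2.1⟩
  · have hGRR : ∀ b ≤ a, b ∈ ({1} ∪ {k | 0 < k ∧ Even k} : Set ℕ) → b ∈ GRR a := by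
      rintro b hba (hb | ⟨hb, hbe⟩)
      exacts [Or.inl hb, Or.inr ⟨hb, hbe, by omega⟩]
    have ha1 : 1 ≤ a := ha.elim (fun h => h.ge) fun h => h.1
    exact ⟨GRR a, ⟨a, ha1, rfl⟩, hGRR a le_rfl ha, hGRR⟩

theorem lexLE_GRQ {n : ℕ} (hn : 2 ≤ n) : lexLE ({1} ∪ {k | 0 < k ∧ Even k}) (GRQ n) := by
  refine lexLE_iff.mpr fun a ha => ⟨2 * n - 1, ⟨Or.inr rfl, ?_⟩, ?_⟩ <;>
    simp only [GRQ, Set.mem_sdiff, Set.mem_union, Set.mem_singleton_iff, Set.mem_ofPred_eq,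
      Nat.even_iff] at * <;>
    omega

theorem lexIsGLB_GRQ :
    lexIsGLB { I | ∃ n : ℕ, 2 ≤ n ∧ I = GRQ n } ({1} ∪ {k | 0 < k ∧ Even k}) := by
  refine lexIsGLB_of_forall_not_mem (fun J ⟨n, hn, hJ⟩ => hJ ▸ lexLE_GRQ hn) fun a ha =>
    ⟨GRQ (a + 2), ⟨a + 2, le_add_self, rfl⟩, ?_, fun b hba hb => ?_⟩ <;>
    simp only [GRQ, Set.mem_union, Set.mem_singleton_iff, Set.mem_ofPred_eq, Nat.even_iff] at * <;>
    omega

/-- In the lexicographic order on `2^ℕ`: the set of odd numbers is the supremum of the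
sets `{1,3,…,2n−1}` (`n ≥ 1`), and the set `{1} ∪ {even numbers}` is simultaneously the
supremum of the sets `{1,2,4,…,2n}` (`n ≥ 1`) and the infimum of the sets
`{1,2,4,…,2n−2,2n−1}` (`n ≥ 2`). -/
theorem kronecker_GR_limits :
    lexIsLUB { I | ∃ n : ℕ, 1 ≤ n ∧ I = GRP n } {k | Odd k} ∧
    lexIsLUB { I | ∃ n : ℕ, 1 ≤ n ∧ I = GRR n } ({1} ∪ {k | 0 < k ∧ Even k}) ∧
    lexIsGLB { I | ∃ n : ℕ, 2 ≤ n ∧ I = GRQ n } ({1} ∪ {k | 0 < k ∧ Even k}) :=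
  ⟨lexIsLUB_GRP, lexIsLUB_GRR, lexIsGLB_GRQ⟩
end
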